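/- Let A be Hermitian of rank r ≤ n with polar factor P (i.e. P = (A²)^{1/2} is the positive semi-definite factor in A = SP = PS). Let E be Hermitian, A₁ a matrix with left polar factorisation A₁ = P₁S₁ and A₂ with right polar factorisation A₂ = S₂P₂. Assume P = P₁P₂ = P₂P₁ and k = ‖A₁⁺ E A₂⁺‖₂ ≤ 1. Then for every i ∈ {1,…,r}: λ_{n-r+i}(A+E) ≤ λ_i + k|λ_i| and λ_i(A+E) ≥ λ_i − k|λ_i|. -/

import Mathlib

open Matrix
open scoped ComplexOrder Matrix.Norms.L2Operator

/-- The spectral norm (operator 2-norm) of a complex matrix. -/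
noncomputable def specNorm {m n : Type*} [Fintype m] [Fintype n] [DecidableEq n]
    (A : Matrix m n ℂ) : ℝ :=
  ‖LinearMap.toContinuousLinearMap (Matrix.toEuclideanLin A)‖

/-- `B` is the Moore–Penrose pseudoinverse of `A` (the four Penrose conditions). -/
def IsMP {m n : Type*} [Fintype m] [Fintype n]
    (A : Matrix m n ℂ) (B : Matrix n m ℂ) : Prop :=
  A * B * A = A ∧ B * A * B = B ∧ (A * B)ᴴ = A * B ∧ (B * A)ᴴ = B * A

namespace Stmt4Aux

variable {n : ℕ}

lemma specNorm_eq_norm (A : Matrix (Fin n) (Fin n) ℂ) : specNorm A = ‖A‖ := rfl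

/-- conjugated real diagonal matrix -/
noncomputable def cdiag (V : Matrix (Fin n) (Fin n) ℂ) (f : Fin n → ℝ) :
    Matrix (Fin n) (Fin n) ℂ :=
  V * Matrix.diagonal (fun i => (f i : ℂ)) * Vᴴ

lemma cdiag_def (V : Matrix (Fin n) (Fin n) ℂ) (f : Fin n → ℝ) :
    cdiag V f = V * Matrix.diagonal (fun i => (f i : ℂ)) * Vᴴ := rfl

lemma cdiag_mul {V : Matrix (Fin n) (Fin n) ℂ} (hV1 : Vᴴ * V = 1) (f g : Fin n → ℝ) :
    cdiag V f * cdiag V g = cdiag V (fun i => f i * g i) := by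
  unfold cdiag
  have h : Vᴴ * (V * (Matrix.diagonal (fun i => (g i : ℂ)) * Vᴴ)) =
      Matrix.diagonal (fun i => (g i : ℂ)) * Vᴴ := by
    rw [← Matrix.mul_assoc, hV1, Matrix.one_mul]
  simp only [Matrix.mul_assoc, h, ← Matrix.mul_assoc (Matrix.diagonal fun i => (f i : ℂ)),
    diagonal_mul_diagonal]
  norm_cast

lemma cdiag_conjTranspose (V : Matrix (Fin n) (Fin n) ℂ) (f : Fin n → ℝ) :
    (cdiag V f)ᴴ = cdiag V f := by
  unfold cdiag
  simp only [Matrix.conjTranspose_mul, Matrix.conjTranspose_conjTranspose,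
    Matrix.diagonal_conjTranspose, Matrix.mul_assoc]
  congr 1
  ext i j
  simp [Matrix.diagonal, Pi.star_def]

lemma cdiag_congr {V : Matrix (Fin n) (Fin n) ℂ} {f g : Fin n → ℝ} (h : ∀ i, f i = g i) :
    cdiag V f = cdiag V g := by
  have : f = g := funext h
  rw [this]

/-- quadratic form of a conjugated diagonal -/
lemma qf_cdiag (V : Matrix (Fin n) (Fin n) ℂ) (f : Fin n → ℝ) (x : Fin n → ℂ) :
    star x ⬝ᵥ (cdiag V f *ᵥ x) =
      ((∑ j, f j * ‖(Vᴴ *ᵥ x) j‖ ^ 2 : ℝ) : ℂ) := by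
  unfold cdiag
  rw [← Matrix.mulVec_mulVec, ← Matrix.mulVec_mulVec]
  rw [Matrix.dotProduct_mulVec (star x) V]
  have hsv : star x ᵥ* V = star (Vᴴ *ᵥ x) := by
    rw [Matrix.star_mulVec, Matrix.conjTranspose_conjTranspose]
  rw [hsv]
  simp only [Matrix.mulVec_diagonal, dotProduct, Pi.star_apply]
  push_cast
  congr 1
  ext j
  set c := (Vᴴ *ᵥ x) j
  calc star c * ((f j : ℂ) * c) = (f j : ℂ) * (star c * c) := by ring
    _ = (f j : ℂ) * ((‖c‖ ^ 2 : ℝ) : ℂ) := by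
        rw [Complex.star_def, Complex.conj_mul']; norm_cast
    _ = _ := by push_cast; ring

lemma dot_self_eq (V : Matrix (Fin n) (Fin n) ℂ) (hV2 : V * Vᴴ = 1)
    (x : Fin n → ℂ) :
    star x ⬝ᵥ x = ((∑ j, ‖(Vᴴ *ᵥ x) j‖ ^ 2 : ℝ) : ℂ) := by
  have h := qf_cdiag V (fun _ => 1) x
  have hone : cdiag V (fun _ => (1 : ℝ)) = 1 := by
    unfold cdiag
    simp only [Complex.ofReal_one, Matrix.diagonal_one, Matrix.mul_one, hV2]
  rw [hone, Matrix.one_mulVec] at h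
  simpa using h

/-- An eigenvalue of a matrix is bounded by the operator norm. -/
lemma eig_bound {M : Matrix (Fin n) (Fin n) ℂ} {γ : ℝ} {v : Fin n → ℂ}
    (hv : v ≠ 0) (heq : M *ᵥ v = (γ : ℂ) • v) : |γ| ≤ ‖M‖ := by
  set x : EuclideanSpace ℂ (Fin n) := (WithLp.equiv 2 (Fin n → ℂ)).symm v with hx
  have hx0 : x ≠ 0 := by
    simpa [hx] using hv
  have happ : Matrix.toEuclideanCLM (𝕜 := ℂ) M x = (WithLp.equiv 2 (Fin n → ℂ)).symm (M *ᵥ v) := by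
    rw [hx]
    rfl
  have h2 : Matrix.toEuclideanCLM (𝕜 := ℂ) M x = (γ : ℂ) • x := by
    rw [happ, heq, hx]
    rfl
  have h3 : ‖Matrix.toEuclideanCLM (𝕜 := ℂ) M x‖ ≤ ‖M‖ * ‖x‖ := by
    rw [Matrix.cstar_norm_def]
    exact (Matrix.toEuclideanCLM (𝕜 := ℂ) M).le_opNorm x
  rw [h2, norm_smul] at h3
  simp only [Complex.norm_real, Real.norm_eq_abs] at h3
  have hxpos : 0 < ‖x‖ := norm_pos_iff.mpr hx0
  exact le_of_mul_le_mul_right h3 hxpos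

/-- monotonicity of `t ↦ t - k|t|` for `0 ≤ k ≤ 1`. -/
lemma mono_sub {k a b : ℝ} (hk0 : 0 ≤ k) (hk1 : k ≤ 1) (hab : a ≤ b) :
    a - k * |a| ≤ b - k * |b| := by
  rcases abs_cases a with ⟨ha, _⟩ | ⟨ha, _⟩ <;> rcases abs_cases b with ⟨hb, _⟩ | ⟨hb, _⟩ <;>
    nlinarith

lemma mono_add {k a b : ℝ} (hk0 : 0 ≤ k) (hk1 : k ≤ 1) (hab : a ≤ b) :
    a + k * |a| ≤ b + k * |b| := by
  rcases abs_cases a with ⟨ha, _⟩ | ⟨ha, _⟩ <;> rcases abs_cases b with ⟨hb, _⟩ | ⟨hb, _⟩ <;>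
    nlinarith

/-- If `Q` is a Hermitian matrix absorbing `P * P` (with `P` Hermitian), then `Q * P = P`. -/
lemma absorb {P Q : Matrix (Fin n) (Fin n) ℂ} (hPh : Pᴴ = P) (hQh : Qᴴ = Q)
    (habs : Q * (P * P) = P * P) : Q * P = P := by
  have hPPQ : (P * P) * Q = P * P := by
    have h := congrArg Matrix.conjTranspose habs
    simp only [Matrix.conjTranspose_mul, hPh, hQh] at h
    exact h
  have key : (Q * P - P) * (Q * P - P)ᴴ = 0 := by
    have h1 : (Q * P - P)ᴴ = P * Q - P := by
      simp [Matrix.conjTranspose_mul, hPh, hQh]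
    rw [h1]
    have expand : (Q * P - P) * (P * Q - P) =
        Q * (P * P) * Q - Q * (P * P) - (P * P) * Q + P * P := by noncomm_ring
    have e1 : Q * (P * P) * Q = P * P := by rw [habs, hPPQ]
    rw [expand, e1, habs, hPPQ]
    simp
  have := Matrix.self_mul_conjTranspose_eq_zero.mp key
  rwa [sub_eq_zero] at this

/-- columns of the conjugating unitary are eigenvectors. -/
lemma eigcol {U : Matrix (Fin n) (Fin n) ℂ} (hU1 : Uᴴ * U = 1)
    (f : Fin n → ℝ) (j : Fin n) :
    (U * Matrix.diagonal (fun i => (f i : ℂ)) * Uᴴ) *ᵥ (U *ᵥ Pi.single j 1) =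
      (f j : ℂ) • (U *ᵥ Pi.single j 1) ∧ U *ᵥ Pi.single j 1 ≠ 0 := by
  constructor
  · rw [Matrix.mulVec_mulVec, Matrix.mul_assoc, Matrix.mul_assoc, hU1, Matrix.mul_one,
      ← Matrix.mulVec_mulVec]
    have : Matrix.diagonal (fun i => (f i : ℂ)) *ᵥ Pi.single j 1 =
        (f j : ℂ) • (Pi.single j 1 : Fin n → ℂ) := by
      ext i
      simp only [Matrix.mulVec_diagonal, Pi.smul_apply]
      rcases eq_or_ne i j with rfl | hij
      · simp
      · simp [Pi.single_eq_of_ne hij]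
    rw [this, Matrix.mulVec_smul]
  · intro h
    have : (Uᴴ * U) *ᵥ Pi.single j 1 = 0 := by
      rw [← Matrix.mulVec_mulVec, h, Matrix.mulVec_zero]
    rw [hU1, Matrix.one_mulVec] at this
    have := congrFun this j
    simp at this

lemma commute_cdiag {V X : Matrix (Fin n) (Fin n) ℂ} (hV1 : Vᴴ * V = 1) (hV2 : V * Vᴴ = 1)
    {d g : Fin n → ℝ} (hdg : ∀ i j, d i = d j → g i = g j)
    (hcomm : X * cdiag V d = cdiag V d * X) :
    X * cdiag V g = cdiag V g * X := by
  set Dd := Matrix.diagonal (fun i => (d i : ℂ)) with hDd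
  set Dg := Matrix.diagonal (fun i => (g i : ℂ)) with hDg
  set Y := Vᴴ * X * V with hY
  have hX : X = V * Y * Vᴴ := by
    have h1 : V * (Vᴴ * X * V) * Vᴴ = (V * Vᴴ) * X * (V * Vᴴ) := by noncomm_ring
    rw [hY, h1, hV2, Matrix.one_mul, Matrix.mul_one]
  have e1 : Y * Dd = Dd * Y := by
    have l1 : Vᴴ * (X * (V * Dd * Vᴴ)) * V = Y * Dd := by
      calc Vᴴ * (X * (V * Dd * Vᴴ)) * V = ((Vᴴ * X * V) * Dd) * (Vᴴ * V) := by noncomm_ring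
        _ = Y * Dd := by rw [hV1, Matrix.mul_one, hY]
    have l2 : Vᴴ * ((V * Dd * Vᴴ) * X) * V = Dd * Y := by
      calc Vᴴ * ((V * Dd * Vᴴ) * X) * V = (Vᴴ * V) * (Dd * (Vᴴ * X * V)) := by noncomm_ring
        _ = Dd * Y := by rw [hV1, Matrix.one_mul, hY]
    rw [← l1, ← l2]
    unfold Dd
    rw [show X * (V * Matrix.diagonal (fun i => (d i : ℂ)) * Vᴴ) =
      (V * Matrix.diagonal (fun i => (d i : ℂ)) * Vᴴ) * X from hcomm]
  have e2 : Y * Dg = Dg * Y := by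
    ext i j
    have h1 := congrArg (fun M => M i j) e1
    simp only [hDd, Matrix.mul_diagonal, Matrix.diagonal_mul] at h1
    simp only [hDg, Matrix.mul_diagonal, Matrix.diagonal_mul]
    rcases eq_or_ne (Y i j) 0 with h0 | h0
    · simp [h0]
    · have hd : (d j : ℂ) = (d i : ℂ) := by
        have : Y i j * (d j : ℂ) = Y i j * (d i : ℂ) := by rw [h1]; ring
        exact mul_left_cancel₀ h0 this
      have hdd : d j = d i := by exact_mod_cast hd
      have hgg : g j = g i := hdg j i hdd
      rw [hgg]; ring
  calc X * cdiag V g = V * (Y * Dg) * Vᴴ := by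
        rw [hX]; unfold cdiag; rw [← hDg]
        calc V * Y * Vᴴ * (V * Dg * Vᴴ) = V * (Y * ((Vᴴ * V) * Dg)) * Vᴴ := by noncomm_ring
          _ = V * (Y * Dg) * Vᴴ := by rw [hV1, Matrix.one_mul]
    _ = V * (Dg * Y) * Vᴴ := by rw [e2]
    _ = cdiag V g * X := by
        rw [hX]; unfold cdiag; rw [← hDg]
        calc V * (Dg * Y) * Vᴴ = V * (Dg * ((Vᴴ * V) * Y)) * Vᴴ := by rw [hV1, Matrix.one_mul]
          _ = V * Dg * Vᴴ * (V * Y * Vᴴ) := by noncomm_ring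

/-- The subspace of vectors whose `Uᴴ`-coordinates are supported on `s`. -/
noncomputable def coordSub (U : Matrix (Fin n) (Fin n) ℂ) (s : Finset (Fin n)) :
    Submodule ℂ (Fin n → ℂ) :=
  LinearMap.ker ((LinearMap.funLeft ℂ ℂ (Subtype.val : {j : Fin n // j ∉ s} → Fin n)).comp
    (Matrix.mulVecLin Uᴴ))

lemma mem_coordSub {U : Matrix (Fin n) (Fin n) ℂ} {s : Finset (Fin n)} {x : Fin n → ℂ} :
    x ∈ coordSub U s ↔ ∀ j : Fin n, j ∉ s → (Uᴴ *ᵥ x) j = 0 := by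
  simp only [coordSub, LinearMap.mem_ker, LinearMap.comp_apply, Matrix.mulVecLin_apply]
  constructor
  · intro h j hj
    exact congrFun h ⟨j, hj⟩
  · intro h
    ext ⟨j, hj⟩
    exact h j hj

lemma finrank_coordSub {U : Matrix (Fin n) (Fin n) ℂ} (hU1 : Uᴴ * U = 1)
    (s : Finset (Fin n)) : Module.finrank ℂ (coordSub U s) = s.card := by
  set L := (LinearMap.funLeft ℂ ℂ (Subtype.val : {j : Fin n // j ∉ s} → Fin n)).comp
    (Matrix.mulVecLin Uᴴ) with hL
  have hsurj : Function.Surjective L := by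
    rw [hL, LinearMap.coe_comp]
    apply Function.Surjective.comp
    · exact LinearMap.funLeft_surjective_of_injective ℂ ℂ _ Subtype.val_injective
    · intro y
      refine ⟨U *ᵥ y, ?_⟩
      rw [Matrix.mulVecLin_apply, Matrix.mulVec_mulVec, hU1, Matrix.one_mulVec]
  have hrn := LinearMap.finrank_range_add_finrank_ker L
  have hrange : LinearMap.range L = ⊤ := LinearMap.range_eq_top.mpr hsurj
  rw [hrange] at hrn
  have hcodom : Module.finrank ℂ (⊤ : Submodule ℂ ({j : Fin n // j ∉ s} → ℂ)) = n - s.card := by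
    rw [finrank_top, Module.finrank_pi]
    rw [Fintype.card_subtype_compl, Fintype.card_fin]
    congr 1
    simp [Fintype.card_subtype]
  have hdom : Module.finrank ℂ (Fin n → ℂ) = n := by
    rw [Module.finrank_pi, Fintype.card_fin]
  have hcard : s.card ≤ n := by
    simpa using Finset.card_le_univ s
  rw [hcodom, hdom] at hrn
  have h2 : Module.finrank ℂ (LinearMap.ker L) = n - (n - s.card) := by omega
  rw [coordSub, ← hL, h2]
  omega

lemma exists_mem_inf {S T : Submodule ℂ (Fin n → ℂ)}
    (h : n < Module.finrank ℂ S + Module.finrank ℂ T) :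
    ∃ x : Fin n → ℂ, x ≠ 0 ∧ x ∈ S ∧ x ∈ T := by
  have hdim := Submodule.finrank_sup_add_finrank_inf_eq S T
  have hsup : Module.finrank ℂ ↥(S ⊔ T) ≤ n := by
    have := Submodule.finrank_le (S ⊔ T)
    rwa [Module.finrank_pi, Fintype.card_fin] at this
  have hpos : 0 < Module.finrank ℂ ↥(S ⊓ T) := by omega
  have hne : S ⊓ T ≠ ⊥ := by
    intro hbot
    rw [hbot, finrank_bot] at hpos
    omega
  obtain ⟨x, hx, hx0⟩ := Submodule.ne_bot_iff _ |>.mp hne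
  exact ⟨x, hx0, hx.1, hx.2⟩

lemma card_valIco (a b : ℕ) (hb : b ≤ n) :
    (Finset.univ.filter (fun j : Fin n => a ≤ (j : ℕ) ∧ (j : ℕ) < b)).card = b - a := by
  rw [← Finset.card_image_of_injective _ Fin.val_injective]
  have h : (Finset.univ.filter (fun j : Fin n => a ≤ (j : ℕ) ∧ (j : ℕ) < b)).image Fin.val =
      Finset.Ico a b := by
    ext m
    simp only [Finset.mem_image, Finset.mem_filter, Finset.mem_univ, true_and, Finset.mem_Ico]
    constructor
    · rintro ⟨j, ⟨hj1, hj2⟩, rfl⟩; exact ⟨hj1, hj2⟩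
    · rintro ⟨h1, h2⟩; exact ⟨⟨m, lt_of_lt_of_le h2 hb⟩, ⟨h1, h2⟩, rfl⟩
  rw [h, Nat.card_Ico]

end Stmt4Aux

set_option maxHeartbeats 2000000

/-- Theorem 2.4.  `A` Hermitian of rank `r ≤ n` with polar factor `P`
(the positive semi-definite square root of `A²`), `E` Hermitian, `A₁ = P₁S₁` a left
polar factorisation (`P₁ = (A₁A₁ᴴ)^{1/2}`), `A₂ = S₂P₂` a right polar factorisation
(`P₂ = (A₂ᴴA₂)^{1/2}`).  If `P = P₁P₂ = P₂P₁` and `k = ‖A₁⁺ E A₂⁺‖₂ ≤ 1`, then for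
`i < r`: `λ_{n-r+i}(A+E) ≤ λ_i + k|λ_i|` and `λ_i(A+E) ≥ λ_i - k|λ_i|`. -/
theorem stmt4 (n r : ℕ) (hr : r ≤ n)
    (A E A₁ A₂ P P₁ P₂ B₁ B₂ V W : Matrix (Fin n) (Fin n) ℂ)
    (hA : A.IsHermitian) (hE : E.IsHermitian)
    (lam mu : Fin n → ℝ)
    (hV : V ∈ Matrix.unitaryGroup (Fin n) ℂ)
    (hAeig : A = V * Matrix.diagonal (fun i => (lam i : ℂ)) * Vᴴ)
    (hord : ∀ i j : Fin n, i ≤ j → (j : ℕ) < r → lam j ≤ lam i)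
    (hnz : ∀ i : Fin n, (i : ℕ) < r → lam i ≠ 0)
    (hzero : ∀ i : Fin n, r ≤ (i : ℕ) → lam i = 0)
    (hP : P.PosSemidef) (hPsq : P * P = A * A)
    (hP₁ : P₁.PosSemidef) (hP₁sq : P₁ * P₁ = A₁ * A₁ᴴ)
    (hP₂ : P₂.PosSemidef) (hP₂sq : P₂ * P₂ = A₂ᴴ * A₂)
    (hPP : P = P₁ * P₂) (hPcomm : P₁ * P₂ = P₂ * P₁)
    (hB₁ : IsMP A₁ B₁) (hB₂ : IsMP A₂ B₂)
    (hk : specNorm (B₁ * E * B₂) ≤ 1)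
    (hW : W ∈ Matrix.unitaryGroup (Fin n) ℂ)
    (hAE : A + E = W * Matrix.diagonal (fun i => (mu i : ℂ)) * Wᴴ)
    (hmu : Antitone mu) :
    ∀ i : Fin n, ∀ hi : (i : ℕ) < r,
      mu ⟨n - r + (i : ℕ), by omega⟩ ≤ lam i + specNorm (B₁ * E * B₂) * |lam i| ∧
      mu i ≥ lam i - specNorm (B₁ * E * B₂) * |lam i| := by
  classical
  open Stmt4Aux in
  -- abbreviations
  set k : ℝ := specNorm (B₁ * E * B₂) with hkdef
  have hk0 : 0 ≤ k := norm_nonneg _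
  have hk1 : k ≤ 1 := hk
  -- unitary facts
  have hV1 : Vᴴ * V = 1 := by
    have := Matrix.mem_unitaryGroup_iff'.mp hV
    rwa [Matrix.star_eq_conjTranspose] at this
  have hV2 : V * Vᴴ = 1 := by
    have := Matrix.mem_unitaryGroup_iff.mp hV
    rwa [Matrix.star_eq_conjTranspose] at this
  have hW1 : Wᴴ * W = 1 := by
    have := Matrix.mem_unitaryGroup_iff'.mp hW
    rwa [Matrix.star_eq_conjTranspose] at this
  have hW2 : W * Wᴴ = 1 := by
    have := Matrix.mem_unitaryGroup_iff.mp hW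
    rwa [Matrix.star_eq_conjTranspose] at this
  -- the scale functions
  set dd : Fin n → ℝ := fun i => |lam i| with hdd
  set dp : Fin n → ℝ := fun i => (dd i)⁻¹ with hdp
  set rr : Fin n → ℝ := fun i => dd i * (dd i)⁻¹ with hrr
  set ds : Fin n → ℝ := fun i => Real.sqrt (dd i) with hds
  set dsp : Fin n → ℝ := fun i => (Real.sqrt (dd i))⁻¹ with hdsp
  -- P is the conjugated diagonal of |lam|
  have hA_cd : A = cdiag V lam := hAeig
  have hPeq : P = cdiag V dd := by
    have hdpos : (0 : Fin n → ℂ) ≤ fun i => ((dd i : ℝ) : ℂ) := by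
      intro i
      simp only [Pi.zero_apply]
      rw [Complex.zero_le_real]
      exact abs_nonneg _
    have hcd_psd : (cdiag V dd).PosSemidef := by
      rw [cdiag_def]
      exact Matrix.PosSemidef.mul_mul_conjTranspose_same (Matrix.PosSemidef.diagonal hdpos) V
    open scoped MatrixOrder in
    apply fun h2 : P ^ 2 = (cdiag V dd) ^ 2 => by
      rw [← CFC.sqrt_sq P hP.nonneg, h2, CFC.sqrt_sq _ hcd_psd.nonneg]
    rw [pow_two, pow_two, hPsq, cdiag_mul hV1, hA_cd, cdiag_mul hV1]
    congr 1
    funext i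
    simp only [hdd, abs_mul_abs_self]
  -- derived matrices
  set Pp := cdiag V dp with hPpdef
  set RR := cdiag V rr with hRRdef
  set Psq := cdiag V ds with hPsqdef
  set Psqp := cdiag V dsp with hPsqpdef
  have cdmul : ∀ f g : Fin n → ℝ, cdiag V f * cdiag V g = cdiag V (fun i => f i * g i) :=
    cdiag_mul hV1
  have hPsq2 : Psq * Psq = P := by
    rw [hPsqdef, cdmul, hPeq]
    apply cdiag_congr; intro i
    show Real.sqrt (dd i) * Real.sqrt (dd i) = dd i
    exact Real.mul_self_sqrt (abs_nonneg _)
  have hsqrt_ne : ∀ i : Fin n, dd i ≠ 0 → Real.sqrt (dd i) ≠ 0 := by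
    intro i h
    have : 0 < dd i := lt_of_le_of_ne (abs_nonneg _) (Ne.symm h)
    positivity
  have hPsqPsqp : Psq * Psqp = RR := by
    rw [hPsqdef, hPsqpdef, cdmul, hRRdef]
    apply cdiag_congr; intro i
    show Real.sqrt (dd i) * (Real.sqrt (dd i))⁻¹ = dd i * (dd i)⁻¹
    rcases eq_or_ne (dd i) 0 with h | h
    · rw [h]; simp
    · rw [mul_inv_cancel₀ (hsqrt_ne i h), mul_inv_cancel₀ h]
  have hPsqpPsq : Psqp * Psq = RR := by
    rw [hPsqdef, hPsqpdef, cdmul, hRRdef]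
    apply cdiag_congr; intro i
    show (Real.sqrt (dd i))⁻¹ * Real.sqrt (dd i) = dd i * (dd i)⁻¹
    rcases eq_or_ne (dd i) 0 with h | h
    · rw [h]; simp
    · rw [inv_mul_cancel₀ (hsqrt_ne i h), mul_inv_cancel₀ h]
  have hPsqp2 : Psqp * Psqp = Pp := by
    rw [hPsqpdef, cdmul, hPpdef]
    apply cdiag_congr; intro i
    show (Real.sqrt (dd i))⁻¹ * (Real.sqrt (dd i))⁻¹ = (dd i)⁻¹
    rw [← mul_inv, Real.mul_self_sqrt (abs_nonneg _)]
  have hPpPpP : Pp * Pp * P = Pp := by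
    rw [hPpdef, hPeq, cdmul, cdmul]
    apply cdiag_congr; intro i
    show (dd i)⁻¹ * (dd i)⁻¹ * dd i = (dd i)⁻¹
    rcases eq_or_ne (dd i) 0 with h | h
    · rw [h]; simp
    · field_simp
  have hPPpPp : P * Pp * Pp = Pp := by
    rw [hPpdef, hPeq, cdmul, cdmul]
    apply cdiag_congr; intro i
    show dd i * (dd i)⁻¹ * (dd i)⁻¹ = (dd i)⁻¹
    rcases eq_or_ne (dd i) 0 with h | h
    · rw [h]; simp
    · field_simp
  have hRRmul : RR * RR = RR := by
    rw [hRRdef, cdmul]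
    apply cdiag_congr; intro i
    show dd i * (dd i)⁻¹ * (dd i * (dd i)⁻¹) = dd i * (dd i)⁻¹
    rcases eq_or_ne (dd i) 0 with h | h
    · rw [h]; simp
    · field_simp
  have hPPpPpP : P * Pp * (Pp * P) = RR := by
    rw [hPpdef, hPeq, hRRdef, cdmul, cdmul, cdmul]
    apply cdiag_congr; intro i
    show dd i * (dd i)⁻¹ * ((dd i)⁻¹ * dd i) = dd i * (dd i)⁻¹
    rcases eq_or_ne (dd i) 0 with h | h
    · rw [h]; simp
    · field_simp
  -- Hermitian facts
  have hPph : Ppᴴ = Pp := by rw [hPpdef]; exact cdiag_conjTranspose V dp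
  have hRRh : RRᴴ = RR := by rw [hRRdef]; exact cdiag_conjTranspose V rr
  have hPsqh : Psqᴴ = Psq := by rw [hPsqdef]; exact cdiag_conjTranspose V ds
  have hPsqph : Psqpᴴ = Psqp := by rw [hPsqpdef]; exact cdiag_conjTranspose V dsp
  have hPh : Pᴴ = P := hP.isHermitian
  have hP₁h : P₁ᴴ = P₁ := hP₁.isHermitian
  have hP₂h : P₂ᴴ = P₂ := hP₂.isHermitian
  -- commutation of P₁, P₂ with Pp
  have hP₁P : P₁ * P = P * P₁ := by
    rw [hPP]
    calc P₁ * (P₁ * P₂) = P₁ * (P₂ * P₁) := by rw [hPcomm]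
      _ = (P₁ * P₂) * P₁ := by rw [Matrix.mul_assoc]
  have hP₂P : P₂ * P = P * P₂ := by
    rw [hPP]
    calc P₂ * (P₁ * P₂) = (P₂ * P₁) * P₂ := by rw [Matrix.mul_assoc]
      _ = (P₁ * P₂) * P₂ := by rw [hPcomm]
  have hcompat : ∀ i j : Fin n, dd i = dd j → dp i = dp j := by
    intro i j h
    show (dd i)⁻¹ = (dd j)⁻¹
    rw [h]
  have hP₁Pp : P₁ * Pp = Pp * P₁ := by
    rw [hPpdef]
    exact commute_cdiag hV1 hV2 hcompat (by rw [← hPeq]; exact hP₁P)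
  have hP₂Pp : P₂ * Pp = Pp * P₂ := by
    rw [hPpdef]
    exact commute_cdiag hV1 hV2 hcompat (by rw [← hPeq]; exact hP₂P)
  -- projections (Q₁ = A₁B₁, Q₂ = B₂A₂ written inline)
  have hQ₁h : (A₁ * B₁)ᴴ = A₁ * B₁ := hB₁.2.2.1
  have hQ₂h : (B₂ * A₂)ᴴ = B₂ * A₂ := hB₂.2.2.2
  have hQ₁P₁ : (A₁ * B₁) * P₁ = P₁ := by
    apply Stmt4Aux.absorb hP₁h hQ₁h
    rw [hP₁sq]
    calc A₁ * B₁ * (A₁ * A₁ᴴ) = (A₁ * B₁ * A₁) * A₁ᴴ := by noncomm_ring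
      _ = A₁ * A₁ᴴ := by rw [hB₁.1]
  have hQ₂P₂ : (B₂ * A₂) * P₂ = P₂ := by
    apply Stmt4Aux.absorb hP₂h hQ₂h
    rw [hP₂sq]
    have hQ2A2c : B₂ * A₂ * A₂ᴴ = A₂ᴴ := by
      calc B₂ * A₂ * A₂ᴴ = (B₂ * A₂)ᴴ * A₂ᴴ := by rw [hB₂.2.2.2]
        _ = (A₂ * (B₂ * A₂))ᴴ := by rw [← Matrix.conjTranspose_mul]
        _ = (A₂ * B₂ * A₂)ᴴ := by rw [Matrix.mul_assoc]
        _ = A₂ᴴ := by rw [hB₂.1]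
    calc B₂ * A₂ * (A₂ᴴ * A₂) = (B₂ * A₂ * A₂ᴴ) * A₂ := by noncomm_ring
      _ = A₂ᴴ * A₂ := by rw [hQ2A2c]
  have hQ₁P : (A₁ * B₁) * P = P := by
    rw [hPP, ← Matrix.mul_assoc, hQ₁P₁]
  have hPQ₁ : P * (A₁ * B₁) = P := by
    have h := congrArg Matrix.conjTranspose hQ₁P
    rwa [Matrix.conjTranspose_mul, hQ₁h, hPh] at h
  have hQ₂P : (B₂ * A₂) * P = P := by
    rw [hPP, hPcomm, ← Matrix.mul_assoc, hQ₂P₂]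
  have hPQ₂ : P * (B₂ * A₂) = P := by
    have h := congrArg Matrix.conjTranspose hQ₂P
    rwa [Matrix.conjTranspose_mul, hQ₂h, hPh] at h
  have hPpQ₁ : Pp * (A₁ * B₁) = Pp := by
    calc Pp * (A₁ * B₁) = Pp * Pp * P * (A₁ * B₁) := by rw [hPpPpP]
      _ = Pp * Pp * (P * (A₁ * B₁)) := by rw [Matrix.mul_assoc]
      _ = Pp * Pp * P := by rw [hPQ₁]
      _ = Pp := hPpPpP
  have hQ₂Pp : (B₂ * A₂) * Pp = Pp := by
    calc (B₂ * A₂) * Pp = (B₂ * A₂) * (P * Pp * Pp) := by rw [hPPpPp]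
      _ = ((B₂ * A₂) * P) * Pp * Pp := by noncomm_ring
      _ = P * Pp * Pp := by rw [hQ₂P]
      _ = Pp := hPPpPp
  -- make the abbreviations opaque from now on
  clear_value dd dp rr ds dsp Pp RR Psq Psqp
  -- norm bound  ‖A₂ * Pp * A₁‖ ≤ 1
  have hRRnorm : ‖RR‖ ≤ 1 := by
    have h1 : ‖RR‖ * ‖RR‖ = ‖RR‖ := by
      rw [← Matrix.l2_opNorm_conjTranspose_mul_self RR, hRRh, hRRmul]
    nlinarith [norm_nonneg RR]
  have hnormsq : ∀ X : Matrix (Fin n) (Fin n) ℂ, ‖Xᴴ * X‖ = ‖X‖ * ‖X‖ :=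
    Matrix.l2_opNorm_conjTranspose_mul_self
  have hnormsq' : ∀ X : Matrix (Fin n) (Fin n) ℂ, ‖X * Xᴴ‖ = ‖X‖ * ‖X‖ := by
    intro X
    rw [show X * Xᴴ = (Xᴴ)ᴴ * Xᴴ by rw [Matrix.conjTranspose_conjTranspose],
      hnormsq, Matrix.l2_opNorm_conjTranspose]
  have hMnorm : ‖A₂ * Pp * A₁‖ ≤ 1 := by
    have e1 : (A₂ * Pp * A₁)ᴴ * (A₂ * Pp * A₁) = (Pp * P₂ * A₁)ᴴ * (Pp * P₂ * A₁) := by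
      have hMH : (A₂ * Pp * A₁)ᴴ = A₁ᴴ * (Pp * A₂ᴴ) := by
        rw [Matrix.conjTranspose_mul, Matrix.conjTranspose_mul, hPph]
      have hM₁H : (Pp * P₂ * A₁)ᴴ = A₁ᴴ * (P₂ * Pp) := by
        rw [Matrix.conjTranspose_mul, Matrix.conjTranspose_mul, hPph, hP₂h]
      rw [hMH, hM₁H]
      calc A₁ᴴ * (Pp * A₂ᴴ) * (A₂ * Pp * A₁)
          = A₁ᴴ * (Pp * (A₂ᴴ * A₂) * Pp) * A₁ := by noncomm_ring
        _ = A₁ᴴ * (Pp * (P₂ * P₂) * Pp) * A₁ := by rw [← hP₂sq]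
        _ = A₁ᴴ * ((Pp * P₂) * (P₂ * Pp)) * A₁ := by noncomm_ring
        _ = A₁ᴴ * ((P₂ * Pp) * (Pp * P₂)) * A₁ := by rw [hP₂Pp]
        _ = A₁ᴴ * (P₂ * Pp) * (Pp * P₂ * A₁) := by noncomm_ring
    have e2 : (Pp * P₂ * A₁) * (Pp * P₂ * A₁)ᴴ = (Pp * P₂ * P₁) * (Pp * P₂ * P₁)ᴴ := by
      have hM₁H : (Pp * P₂ * A₁)ᴴ = A₁ᴴ * (P₂ * Pp) := by
        rw [Matrix.conjTranspose_mul, Matrix.conjTranspose_mul, hPph, hP₂h]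
      have hNH : (Pp * P₂ * P₁)ᴴ = P₁ * (P₂ * Pp) := by
        rw [Matrix.conjTranspose_mul, Matrix.conjTranspose_mul, hPph, hP₂h, hP₁h]
      rw [hM₁H, hNH]
      calc (Pp * P₂ * A₁) * (A₁ᴴ * (P₂ * Pp))
          = Pp * P₂ * (A₁ * A₁ᴴ) * (P₂ * Pp) := by noncomm_ring
        _ = Pp * P₂ * (P₁ * P₁) * (P₂ * Pp) := by rw [← hP₁sq]
        _ = (Pp * P₂ * P₁) * (P₁ * (P₂ * Pp)) := by noncomm_ring
    have e3 : (Pp * P₂ * P₁)ᴴ * (Pp * P₂ * P₁) = RR := by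
      have hNH : (Pp * P₂ * P₁)ᴴ = P₁ * (P₂ * Pp) := by
        rw [Matrix.conjTranspose_mul, Matrix.conjTranspose_mul, hPph, hP₂h, hP₁h]
      rw [hNH]
      calc P₁ * (P₂ * Pp) * (Pp * P₂ * P₁)
          = (P₁ * P₂) * Pp * (Pp * (P₂ * P₁)) := by noncomm_ring
        _ = P * Pp * (Pp * P) := by rw [← hPP, ← hPcomm, ← hPP]
        _ = RR := hPPpPpP
    have n1 : ‖A₂ * Pp * A₁‖ * ‖A₂ * Pp * A₁‖ = ‖Pp * P₂ * A₁‖ * ‖Pp * P₂ * A₁‖ := by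
      rw [← hnormsq, ← hnormsq, e1]
    have n2 : ‖Pp * P₂ * A₁‖ * ‖Pp * P₂ * A₁‖ = ‖Pp * P₂ * P₁‖ * ‖Pp * P₂ * P₁‖ := by
      rw [← hnormsq', ← hnormsq', e2]
    have n3 : ‖Pp * P₂ * P₁‖ * ‖Pp * P₂ * P₁‖ = ‖RR‖ := by
      rw [← hnormsq, e3]
    nlinarith [norm_nonneg (A₂ * Pp * A₁), norm_nonneg (Pp * P₂ * A₁), norm_nonneg (Pp * P₂ * P₁),
      norm_nonneg RR]
  have hknorm : ‖B₁ * E * B₂‖ = k := by rw [hkdef, Stmt4Aux.specNorm_eq_norm]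
  -- key 1 : eigenvalues of Psqp * E * Psqp are bounded by k
  have key1 : ∀ (γ : ℝ) (v : Fin n → ℂ), v ≠ 0 →
      (Psqp * E * Psqp) *ᵥ v = (γ : ℂ) • v → |γ| ≤ k := by
    intro γ v hv heq
    rcases eq_or_ne γ 0 with rfl | hγ
    · simpa using hk0
    have hγc : (γ : ℂ) ≠ 0 := by exact_mod_cast hγ
    have h1 : Psqp *ᵥ ((E * Psqp) *ᵥ v) = (γ : ℂ) • v := by
      rw [Matrix.mulVec_mulVec, ← Matrix.mul_assoc, heq]
    have hw0 : (E * Psqp) *ᵥ v ≠ 0 := by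
      intro h0
      rw [h0, Matrix.mulVec_zero] at h1
      exact hv (by simpa [hγc] using (smul_eq_zero.mp h1.symm))
    have h2 : ((E * B₂) * (A₂ * Pp)) *ᵥ ((E * Psqp) *ᵥ v) = (γ : ℂ) • ((E * Psqp) *ᵥ v) := by
      have e1 : (E * B₂) * (A₂ * Pp) = (E * Psqp) * Psqp := by
        calc (E * B₂) * (A₂ * Pp) = E * ((B₂ * A₂) * Pp) := by noncomm_ring
          _ = E * Pp := by rw [hQ₂Pp]
          _ = E * (Psqp * Psqp) := by rw [hPsqp2]
          _ = (E * Psqp) * Psqp := by noncomm_ring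
      rw [e1, ← Matrix.mulVec_mulVec, h1, Matrix.mulVec_smul]
    have h3 : ((A₂ * Pp) * (E * B₂)) *ᵥ ((A₂ * Pp) *ᵥ ((E * Psqp) *ᵥ v)) =
        (γ : ℂ) • ((A₂ * Pp) *ᵥ ((E * Psqp) *ᵥ v)) := by
      calc ((A₂ * Pp) * (E * B₂)) *ᵥ ((A₂ * Pp) *ᵥ ((E * Psqp) *ᵥ v))
          = (((A₂ * Pp) * (E * B₂)) * (A₂ * Pp)) *ᵥ ((E * Psqp) *ᵥ v) := by
            rw [Matrix.mulVec_mulVec]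
        _ = ((A₂ * Pp) * ((E * B₂) * (A₂ * Pp))) *ᵥ ((E * Psqp) *ᵥ v) := by
            rw [Matrix.mul_assoc]
        _ = (A₂ * Pp) *ᵥ (((E * B₂) * (A₂ * Pp)) *ᵥ ((E * Psqp) *ᵥ v)) :=
            (Matrix.mulVec_mulVec _ _ _).symm
        _ = (A₂ * Pp) *ᵥ ((γ : ℂ) • ((E * Psqp) *ᵥ v)) := by rw [h2]
        _ = (γ : ℂ) • ((A₂ * Pp) *ᵥ ((E * Psqp) *ᵥ v)) := Matrix.mulVec_smul _ _ _
    have hw₂0 : (A₂ * Pp) *ᵥ ((E * Psqp) *ᵥ v) ≠ 0 := by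
      intro h0
      rw [← Matrix.mulVec_mulVec, h0, Matrix.mulVec_zero] at h2
      exact hw0 (by simpa [hγc] using (smul_eq_zero.mp h2.symm))
    have h5 : (A₂ * Pp) * (E * B₂) = (A₂ * Pp * A₁) * (B₁ * E * B₂) := by
      calc (A₂ * Pp) * (E * B₂) = A₂ * (Pp * (A₁ * B₁)) * (E * B₂) := by rw [hPpQ₁]
        _ = (A₂ * Pp * A₁) * (B₁ * E * B₂) := by noncomm_ring
    rw [h5] at h3
    have hb := Stmt4Aux.eig_bound hw₂0 h3
    calc |γ| ≤ ‖(A₂ * Pp * A₁) * (B₁ * E * B₂)‖ := hb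
      _ ≤ ‖A₂ * Pp * A₁‖ * ‖B₁ * E * B₂‖ := Matrix.l2_opNorm_mul _ _
      _ ≤ 1 * k := by
          rw [hknorm]
          exact mul_le_mul_of_nonneg_right hMnorm hk0
      _ = k := one_mul k
  -- key 2 : quadratic-form bound for E on the range of RR
  have key2 : ∀ x : Fin n → ℂ, RR *ᵥ x = x →
      ∃ e : ℝ, star x ⬝ᵥ (E *ᵥ x) = (e : ℂ) ∧
        |e| ≤ k * (∑ j, dd j * ‖(Vᴴ *ᵥ x) j‖ ^ 2) := by
    intro x hx
    have hGh : (Psqp * E * Psqp).IsHermitian := by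
      show (Psqp * E * Psqp)ᴴ = Psqp * E * Psqp
      rw [Matrix.conjTranspose_mul, Matrix.conjTranspose_mul, hPsqph, hE.eq]
      noncomm_ring
    obtain ⟨U, γ, hU1, hU2, hspec⟩ : ∃ (U : Matrix (Fin n) (Fin n) ℂ) (γ : Fin n → ℝ),
        Uᴴ * U = 1 ∧ U * Uᴴ = 1 ∧
          Psqp * E * Psqp = U * Matrix.diagonal (fun i => (γ i : ℂ)) * Uᴴ := by
      refine ⟨(Matrix.IsHermitian.eigenvectorUnitary hGh : Matrix (Fin n) (Fin n) ℂ),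
        hGh.eigenvalues, ?_, ?_, ?_⟩
      · have := Matrix.mem_unitaryGroup_iff'.mp (Matrix.IsHermitian.eigenvectorUnitary hGh).2
        rwa [Matrix.star_eq_conjTranspose] at this
      · have := Matrix.mem_unitaryGroup_iff.mp (Matrix.IsHermitian.eigenvectorUnitary hGh).2
        rwa [Matrix.star_eq_conjTranspose] at this
      · have h := hGh.spectral_theorem
        rwa [Unitary.conjStarAlgAut_apply, Matrix.star_eq_conjTranspose] at h
    have hγk : ∀ j, |γ j| ≤ k := by
      intro j
      obtain ⟨he, hne⟩ := Stmt4Aux.eigcol hU1 γ j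
      exact key1 (γ j) (U *ᵥ Pi.single j 1) hne (by rw [hspec]; exact he)
    have t1 : star (Psq *ᵥ x) = star x ᵥ* Psq := by
      rw [Matrix.star_mulVec, hPsqh]
    have t3 : Psq * ((Psqp * E * Psqp) * Psq) = RR * E * RR := by
      calc Psq * ((Psqp * E * Psqp) * Psq) = (Psq * Psqp) * E * (Psqp * Psq) := by noncomm_ring
        _ = RR * E * RR := by rw [hPsqPsqp, hPsqpPsq]
    have t4 : (RR * E * RR) *ᵥ x = RR *ᵥ (E *ᵥ x) := by
      calc (RR * E * RR) *ᵥ x = (RR * E) *ᵥ (RR *ᵥ x) := (Matrix.mulVec_mulVec _ _ _).symm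
        _ = (RR * E) *ᵥ x := by rw [hx]
        _ = RR *ᵥ (E *ᵥ x) := (Matrix.mulVec_mulVec _ _ _).symm
    have t5 : star x ᵥ* RR = star x := by
      have h := congrArg star hx
      rwa [Matrix.star_mulVec, hRRh] at h
    have hform : star x ⬝ᵥ (E *ᵥ x) =
        star (Psq *ᵥ x) ⬝ᵥ ((Psqp * E * Psqp) *ᵥ (Psq *ᵥ x)) := by
      refine Eq.symm ?_
      calc star (Psq *ᵥ x) ⬝ᵥ ((Psqp * E * Psqp) *ᵥ (Psq *ᵥ x))
          = (star x ᵥ* Psq) ⬝ᵥ (((Psqp * E * Psqp) * Psq) *ᵥ x) := by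
            rw [t1, Matrix.mulVec_mulVec]
        _ = star x ⬝ᵥ (Psq *ᵥ (((Psqp * E * Psqp) * Psq) *ᵥ x)) :=
            (Matrix.dotProduct_mulVec (star x) Psq _).symm
        _ = star x ⬝ᵥ ((Psq * ((Psqp * E * Psqp) * Psq)) *ᵥ x) := by
            rw [Matrix.mulVec_mulVec]
        _ = star x ⬝ᵥ ((RR * E * RR) *ᵥ x) := by rw [t3]
        _ = star x ⬝ᵥ (RR *ᵥ (E *ᵥ x)) := by rw [t4]
        _ = (star x ᵥ* RR) ⬝ᵥ (E *ᵥ x) := Matrix.dotProduct_mulVec _ _ _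
        _ = star x ⬝ᵥ (E *ᵥ x) := by rw [t5]
    have hcd : Psqp * E * Psqp = Stmt4Aux.cdiag U γ := by
      rw [Stmt4Aux.cdiag_def]; exact hspec
    have hqf := Stmt4Aux.qf_cdiag U γ (Psq *ᵥ x)
    refine ⟨∑ j, γ j * ‖(Uᴴ *ᵥ (Psq *ᵥ x)) j‖ ^ 2, ?_, ?_⟩
    · rw [hform, hcd, hqf]
    · -- the total mass equality
      have hzz : star (Psq *ᵥ x) ⬝ᵥ (Psq *ᵥ x) =
          ((∑ j, ‖(Uᴴ *ᵥ (Psq *ᵥ x)) j‖ ^ 2 : ℝ) : ℂ) := Stmt4Aux.dot_self_eq U hU2 _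
      have hzz2 : star (Psq *ᵥ x) ⬝ᵥ (Psq *ᵥ x) =
          ((∑ j, dd j * ‖(Vᴴ *ᵥ x) j‖ ^ 2 : ℝ) : ℂ) := by
        calc star (Psq *ᵥ x) ⬝ᵥ (Psq *ᵥ x)
            = (star x ᵥ* Psq) ⬝ᵥ (Psq *ᵥ x) := by rw [t1]
          _ = star x ⬝ᵥ (Psq *ᵥ (Psq *ᵥ x)) := (Matrix.dotProduct_mulVec (star x) Psq _).symm
          _ = star x ⬝ᵥ ((Psq * Psq) *ᵥ x) := by rw [Matrix.mulVec_mulVec]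
          _ = star x ⬝ᵥ (Stmt4Aux.cdiag V dd *ᵥ x) := by rw [hPsq2, hPeq]
          _ = ((∑ j, dd j * ‖(Vᴴ *ᵥ x) j‖ ^ 2 : ℝ) : ℂ) := Stmt4Aux.qf_cdiag V dd x
      have hmass : (∑ j, ‖(Uᴴ *ᵥ (Psq *ᵥ x)) j‖ ^ 2) = ∑ j, dd j * ‖(Vᴴ *ᵥ x) j‖ ^ 2 := by
        have := hzz.symm.trans hzz2
        exact_mod_cast this
      calc |∑ j, γ j * ‖(Uᴴ *ᵥ (Psq *ᵥ x)) j‖ ^ 2|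
          ≤ ∑ j, |γ j * ‖(Uᴴ *ᵥ (Psq *ᵥ x)) j‖ ^ 2| := Finset.abs_sum_le_sum_abs _ _
        _ ≤ ∑ j, k * ‖(Uᴴ *ᵥ (Psq *ᵥ x)) j‖ ^ 2 := by
            apply Finset.sum_le_sum
            intro j _
            rw [abs_mul, abs_of_nonneg (by positivity : (0:ℝ) ≤ ‖(Uᴴ *ᵥ (Psq *ᵥ x)) j‖ ^ 2)]
            exact mul_le_mul_of_nonneg_right (hγk j) (by positivity)
        _ = k * ∑ j, ‖(Uᴴ *ᵥ (Psq *ᵥ x)) j‖ ^ 2 := by rw [Finset.mul_sum]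
        _ = k * (∑ j, dd j * ‖(Vᴴ *ᵥ x) j‖ ^ 2) := by rw [hmass]
  -- quadratic form identities for A and A+E
  have hqfA : ∀ x : Fin n → ℂ, star x ⬝ᵥ (A *ᵥ x) =
      ((∑ j, lam j * ‖(Vᴴ *ᵥ x) j‖ ^ 2 : ℝ) : ℂ) := by
    intro x
    rw [show A = Stmt4Aux.cdiag V lam from hA_cd]
    exact Stmt4Aux.qf_cdiag V lam x
  have hqfAE : ∀ x : Fin n → ℂ, star x ⬝ᵥ ((A + E) *ᵥ x) =
      ((∑ j, mu j * ‖(Wᴴ *ᵥ x) j‖ ^ 2 : ℝ) : ℂ) := by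
    intro x
    rw [show A + E = Stmt4Aux.cdiag W mu from hAE]
    exact Stmt4Aux.qf_cdiag W mu x
  -- a helper for positivity of the coordinate mass
  have hposmass : ∀ x : Fin n → ℂ, x ≠ 0 → 0 < ∑ j, ‖(Vᴴ *ᵥ x) j‖ ^ 2 := by
    intro x hx0
    have hcne : Vᴴ *ᵥ x ≠ 0 := by
      intro h0
      apply hx0
      have h : V *ᵥ (Vᴴ *ᵥ x) = x := by
        rw [Matrix.mulVec_mulVec, hV2, Matrix.one_mulVec]
      rw [h0, Matrix.mulVec_zero] at h
      exact h.symm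
    obtain ⟨j, hj⟩ := Function.ne_iff.mp hcne
    refine Finset.sum_pos' (fun j _ => by positivity) ⟨j, Finset.mem_univ j, ?_⟩
    have : (0:ℝ) < ‖(Vᴴ *ᵥ x) j‖ := norm_pos_iff.mpr hj
    positivity
  -- a helper : vectors supported (in V-coordinates) inside the first r indices are fixed by RR
  have hfixRR : ∀ (x : Fin n → ℂ),
      (∀ j : Fin n, (Vᴴ *ᵥ x) j ≠ 0 → lam j ≠ 0) → RR *ᵥ x = x := by
    intro x hsupp
    rw [hRRdef, Stmt4Aux.cdiag_def]
    have step1 : (V * Matrix.diagonal (fun t => (rr t : ℂ)) * Vᴴ) *ᵥ x =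
        V *ᵥ (Matrix.diagonal (fun t => (rr t : ℂ)) *ᵥ (Vᴴ *ᵥ x)) := by
      calc (V * Matrix.diagonal (fun t => (rr t : ℂ)) * Vᴴ) *ᵥ x
          = (V * Matrix.diagonal (fun t => (rr t : ℂ))) *ᵥ (Vᴴ *ᵥ x) :=
            (Matrix.mulVec_mulVec _ _ _).symm
        _ = V *ᵥ (Matrix.diagonal (fun t => (rr t : ℂ)) *ᵥ (Vᴴ *ᵥ x)) :=
            (Matrix.mulVec_mulVec _ _ _).symm
    rw [step1]
    have hDc : Matrix.diagonal (fun t => (rr t : ℂ)) *ᵥ (Vᴴ *ᵥ x) = Vᴴ *ᵥ x := by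
      ext j
      rw [Matrix.mulVec_diagonal]
      rcases eq_or_ne ((Vᴴ *ᵥ x) j) 0 with h0 | h0
      · rw [h0, mul_zero]
      · have hlj : lam j ≠ 0 := hsupp j h0
        have h1 : rr j = 1 := by
          rw [hrr]
          show dd j * (dd j)⁻¹ = 1
          apply mul_inv_cancel₀
          rw [hdd]
          exact abs_ne_zero.mpr hlj
        rw [h1]
        simp
    rw [hDc, Matrix.mulVec_mulVec, hV2, Matrix.one_mulVec]
  -- the combined real identity for any x fixed by RR
  have hcombine : ∀ x : Fin n → ℂ, RR *ᵥ x = x →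
      ∃ e : ℝ, (∑ j, mu j * ‖(Wᴴ *ᵥ x) j‖ ^ 2) = (∑ j, lam j * ‖(Vᴴ *ᵥ x) j‖ ^ 2) + e ∧
        |e| ≤ k * (∑ j, dd j * ‖(Vᴴ *ᵥ x) j‖ ^ 2) := by
    intro x hRx
    obtain ⟨e, hee, heb⟩ := key2 x hRx
    refine ⟨e, ?_, heb⟩
    have hsplit : ((∑ j, mu j * ‖(Wᴴ *ᵥ x) j‖ ^ 2 : ℝ) : ℂ) =
        ((∑ j, lam j * ‖(Vᴴ *ᵥ x) j‖ ^ 2 : ℝ) : ℂ) + (e : ℂ) := by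
      rw [← hqfAE x, ← hqfA x, ← hee, Matrix.add_mulVec, dotProduct_add]
    exact_mod_cast hsplit
  -- the mass is the same in V and W coordinates
  have hmassVW : ∀ x : Fin n → ℂ,
      (∑ j, ‖(Vᴴ *ᵥ x) j‖ ^ 2) = ∑ j, ‖(Wᴴ *ᵥ x) j‖ ^ 2 := by
    intro x
    have h1 := Stmt4Aux.dot_self_eq V hV2 x
    have h2 := Stmt4Aux.dot_self_eq W hW2 x
    exact_mod_cast h1.symm.trans h2
  -- main argument
  intro i hi
  constructor
  · -- upper bound : mu (n-r+i) ≤ lam i + k |lam i|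
    obtain ⟨x, hx0, hxS, hxT⟩ := Stmt4Aux.exists_mem_inf
      (S := Stmt4Aux.coordSub V (Finset.univ.filter
        (fun j : Fin n => (i : ℕ) ≤ (j : ℕ) ∧ (j : ℕ) < r)))
      (T := Stmt4Aux.coordSub W (Finset.univ.filter
        (fun j : Fin n => 0 ≤ (j : ℕ) ∧ (j : ℕ) < n - r + (i : ℕ) + 1)))
      (by
        rw [Stmt4Aux.finrank_coordSub hV1, Stmt4Aux.finrank_coordSub hW1,
          Stmt4Aux.card_valIco (i : ℕ) r hr, Stmt4Aux.card_valIco 0 (n - r + (i : ℕ) + 1)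
            (by omega)]
        omega)
    have hSsupp : ∀ j : Fin n, ¬((i : ℕ) ≤ (j : ℕ) ∧ (j : ℕ) < r) → (Vᴴ *ᵥ x) j = 0 := by
      intro j hj
      exact (Stmt4Aux.mem_coordSub.mp hxS) j
        (by simp only [Finset.mem_filter, Finset.mem_univ, true_and]; exact hj)
    have hTsupp : ∀ j : Fin n, ¬((j : ℕ) < n - r + (i : ℕ) + 1) → (Wᴴ *ᵥ x) j = 0 := by
      intro j hj
      refine (Stmt4Aux.mem_coordSub.mp hxT) j ?_
      simp only [Finset.mem_filter, Finset.mem_univ, true_and]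
      push_neg
      intro
      omega
    have hRx : RR *ᵥ x = x := by
      apply hfixRR
      intro j hj
      rcases Classical.em ((i : ℕ) ≤ (j : ℕ) ∧ (j : ℕ) < r) with hc | hc
      · exact hnz j hc.2
      · exact absurd (hSsupp j hc) hj
    obtain ⟨e, hsum, heb⟩ := hcombine x hRx
    have hpos := hposmass x hx0
    -- lower bound on the W-side
    have hlowW : mu ⟨n - r + (i : ℕ), by omega⟩ * (∑ j, ‖(Wᴴ *ᵥ x) j‖ ^ 2) ≤
        ∑ j, mu j * ‖(Wᴴ *ᵥ x) j‖ ^ 2 := by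
      rw [Finset.mul_sum]
      apply Finset.sum_le_sum
      intro j _
      rcases lt_or_ge (j : ℕ) (n - r + (i : ℕ) + 1) with hj | hj
      · refine mul_le_mul_of_nonneg_right ?_ (by positivity)
        apply hmu
        rw [Fin.le_def]
        simpa using by omega
      · rw [hTsupp j (by omega)]
        simp
    -- upper bound on the V-side
    have hupV : (∑ j, lam j * ‖(Vᴴ *ᵥ x) j‖ ^ 2) + e ≤
        (lam i + k * |lam i|) * (∑ j, ‖(Vᴴ *ᵥ x) j‖ ^ 2) := by
      have h1 : e ≤ k * (∑ j, dd j * ‖(Vᴴ *ᵥ x) j‖ ^ 2) := (abs_le.mp heb).2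
      have h2 : (∑ j, lam j * ‖(Vᴴ *ᵥ x) j‖ ^ 2) + k * (∑ j, dd j * ‖(Vᴴ *ᵥ x) j‖ ^ 2)
          = ∑ j, (lam j + k * dd j) * ‖(Vᴴ *ᵥ x) j‖ ^ 2 := by
        rw [Finset.mul_sum, ← Finset.sum_add_distrib]
        congr 1; funext j; ring
      have h3 : ∑ j, (lam j + k * dd j) * ‖(Vᴴ *ᵥ x) j‖ ^ 2 ≤
          ∑ j, (lam i + k * |lam i|) * ‖(Vᴴ *ᵥ x) j‖ ^ 2 := by
        apply Finset.sum_le_sum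
        intro j _
        rcases Classical.em ((i : ℕ) ≤ (j : ℕ) ∧ (j : ℕ) < r) with hc | hc
        · have hlam : lam j ≤ lam i := hord i j (Fin.le_def.mpr hc.1) hc.2
          have hm := Stmt4Aux.mono_add hk0 hk1 hlam
          have hddj : dd j = |lam j| := by rw [hdd]
          rw [hddj]
          exact mul_le_mul_of_nonneg_right hm (by positivity)
        · rw [hSsupp j hc]
          simp
      have h4 : ∑ j, (lam i + k * |lam i|) * ‖(Vᴴ *ᵥ x) j‖ ^ 2 =
          (lam i + k * |lam i|) * (∑ j, ‖(Vᴴ *ᵥ x) j‖ ^ 2) := by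
        rw [Finset.mul_sum]
      linarith
    have hfin : mu ⟨n - r + (i : ℕ), by omega⟩ * (∑ j, ‖(Vᴴ *ᵥ x) j‖ ^ 2) ≤
        (lam i + k * |lam i|) * (∑ j, ‖(Vᴴ *ᵥ x) j‖ ^ 2) := by
      calc mu ⟨n - r + (i : ℕ), by omega⟩ * (∑ j, ‖(Vᴴ *ᵥ x) j‖ ^ 2)
          = mu ⟨n - r + (i : ℕ), by omega⟩ * (∑ j, ‖(Wᴴ *ᵥ x) j‖ ^ 2) := by rw [hmassVW]
        _ ≤ ∑ j, mu j * ‖(Wᴴ *ᵥ x) j‖ ^ 2 := hlowW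
        _ = (∑ j, lam j * ‖(Vᴴ *ᵥ x) j‖ ^ 2) + e := hsum
        _ ≤ (lam i + k * |lam i|) * (∑ j, ‖(Vᴴ *ᵥ x) j‖ ^ 2) := hupV
    exact le_of_mul_le_mul_right hfin hpos
  · -- lower bound : mu i ≥ lam i - k |lam i|
    obtain ⟨x, hx0, hxS, hxT⟩ := Stmt4Aux.exists_mem_inf
      (S := Stmt4Aux.coordSub V (Finset.univ.filter
        (fun j : Fin n => 0 ≤ (j : ℕ) ∧ (j : ℕ) < (i : ℕ) + 1)))
      (T := Stmt4Aux.coordSub W (Finset.univ.filter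
        (fun j : Fin n => (i : ℕ) ≤ (j : ℕ) ∧ (j : ℕ) < n)))
      (by
        rw [Stmt4Aux.finrank_coordSub hV1, Stmt4Aux.finrank_coordSub hW1,
          Stmt4Aux.card_valIco 0 ((i : ℕ) + 1) (by omega), Stmt4Aux.card_valIco (i : ℕ) n le_rfl]
        have := i.isLt
        omega)
    have hSsupp : ∀ j : Fin n, ¬((j : ℕ) < (i : ℕ) + 1) → (Vᴴ *ᵥ x) j = 0 := by
      intro j hj
      refine (Stmt4Aux.mem_coordSub.mp hxS) j ?_
      simp only [Finset.mem_filter, Finset.mem_univ, true_and]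
      push_neg
      intro
      omega
    have hTsupp : ∀ j : Fin n, ¬((i : ℕ) ≤ (j : ℕ)) → (Wᴴ *ᵥ x) j = 0 := by
      intro j hj
      refine (Stmt4Aux.mem_coordSub.mp hxT) j ?_
      simp only [Finset.mem_filter, Finset.mem_univ, true_and]
      push_neg
      intro h
      exact absurd h hj
    have hRx : RR *ᵥ x = x := by
      apply hfixRR
      intro j hj
      rcases Classical.em ((j : ℕ) < (i : ℕ) + 1) with hc | hc
      · exact hnz j (by omega)
      · exact absurd (hSsupp j hc) hj
    obtain ⟨e, hsum, heb⟩ := hcombine x hRx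
    have hpos := hposmass x hx0
    -- upper bound on the W-side
    have hupW : ∑ j, mu j * ‖(Wᴴ *ᵥ x) j‖ ^ 2 ≤ mu i * (∑ j, ‖(Wᴴ *ᵥ x) j‖ ^ 2) := by
      rw [Finset.mul_sum]
      apply Finset.sum_le_sum
      intro j _
      rcases le_or_gt (i : ℕ) (j : ℕ) with hj | hj
      · exact mul_le_mul_of_nonneg_right (hmu (Fin.le_def.mpr hj)) (by positivity)
      · rw [hTsupp j (by omega)]
        simp
    -- lower bound on the V-side
    have hlowV : (lam i - k * |lam i|) * (∑ j, ‖(Vᴴ *ᵥ x) j‖ ^ 2) ≤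
        (∑ j, lam j * ‖(Vᴴ *ᵥ x) j‖ ^ 2) + e := by
      have h1 : -(k * (∑ j, dd j * ‖(Vᴴ *ᵥ x) j‖ ^ 2)) ≤ e := (abs_le.mp heb).1
      have h2 : (∑ j, lam j * ‖(Vᴴ *ᵥ x) j‖ ^ 2) - k * (∑ j, dd j * ‖(Vᴴ *ᵥ x) j‖ ^ 2)
          = ∑ j, (lam j - k * dd j) * ‖(Vᴴ *ᵥ x) j‖ ^ 2 := by
        rw [Finset.mul_sum, ← Finset.sum_sub_distrib]
        congr 1; funext j; ring
      have h3 : ∑ j, (lam i - k * |lam i|) * ‖(Vᴴ *ᵥ x) j‖ ^ 2 ≤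
          ∑ j, (lam j - k * dd j) * ‖(Vᴴ *ᵥ x) j‖ ^ 2 := by
        apply Finset.sum_le_sum
        intro j _
        rcases Classical.em ((j : ℕ) < (i : ℕ) + 1) with hc | hc
        · have hlam : lam i ≤ lam j := hord j i (Fin.le_def.mpr (by omega)) hi
          have hm := Stmt4Aux.mono_sub hk0 hk1 hlam
          have hddj : dd j = |lam j| := by rw [hdd]
          rw [hddj]
          exact mul_le_mul_of_nonneg_right hm (by positivity)
        · rw [hSsupp j hc]
          simp
      have h4 : ∑ j, (lam i - k * |lam i|) * ‖(Vᴴ *ᵥ x) j‖ ^ 2 =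
          (lam i - k * |lam i|) * (∑ j, ‖(Vᴴ *ᵥ x) j‖ ^ 2) := by
        rw [Finset.mul_sum]
      linarith
    have hfin : (lam i - k * |lam i|) * (∑ j, ‖(Vᴴ *ᵥ x) j‖ ^ 2) ≤
        mu i * (∑ j, ‖(Vᴴ *ᵥ x) j‖ ^ 2) := by
      calc (lam i - k * |lam i|) * (∑ j, ‖(Vᴴ *ᵥ x) j‖ ^ 2)
          ≤ (∑ j, lam j * ‖(Vᴴ *ᵥ x) j‖ ^ 2) + e := hlowV
        _ = ∑ j, mu j * ‖(Wᴴ *ᵥ x) j‖ ^ 2 := hsum.symm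
        _ ≤ mu i * (∑ j, ‖(Wᴴ *ᵥ x) j‖ ^ 2) := hupW
        _ = mu i * (∑ j, ‖(Vᴴ *ᵥ x) j‖ ^ 2) := by rw [hmassVW]
    exact le_of_mul_le_mul_right hfin hpos
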